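/- Let A be a commutative ring, I an ideal generated by a regular sequence, and suppose I is a prime ideal. Then the associated graded ring gr_I(A) = ⊕_{d≥0} I^d/I^{d+1} is an integral domain. -/

import Mathlib

/-!
A weakly regular sequence `a₁, …, aₙ` generating `I` is quasi-regular: a form `F` of degree `d`
with `F(a) ∈ I ^ (d + 1)` has all its coefficients in `I`, i.e. `(A ⧸ I)[X₁, …, Xₙ] → gr_I(A)` is
injective. This goes by induction on `n`, splitting off the last variable and using that `aₙ` is
regular modulo `I' = (a₁, …, aₙ₋₁)`, which makes `(I' ^ k : aₙ) = I' ^ k`. Since `A ⧸ I` is a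
domain, so is the polynomial ring, and lifting a product of initial forms back to `A` shows that
the `I`-adic order is additive on products. On the Rees algebra model of `gr_I(A)` this says that
`I • Rees(I)` is prime.
-/

namespace Submodule

variable {R S : Type*} [CommSemiring R] [CommSemiring S] [Algebra R S]

theorem sup_pow_succ_le (P Q : Submodule R S) (k : ℕ) :
    (P ⊔ Q) ^ (k + 1) ≤ P ^ (k + 1) ⊔ Q * (P ⊔ Q) ^ k := by
  induction k with
  | zero => simp
  | succ k ih =>
    calc (P ⊔ Q) ^ (k + 2) = (P ⊔ Q) ^ (k + 1) * (P ⊔ Q) := pow_succ _ _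
      _ ≤ (P ^ (k + 1) ⊔ Q * (P ⊔ Q) ^ k) * (P ⊔ Q) := mul_le_mul_left ih _
      _ = P ^ (k + 2) ⊔ (Q * P ^ (k + 1) ⊔ Q * (P ⊔ Q) ^ (k + 1)) := by
        rw [sup_mul, mul_sup, mul_assoc, ← pow_succ, ← pow_succ, mul_comm _ Q, sup_assoc]
      _ ≤ P ^ (k + 2) ⊔ Q * (P ⊔ Q) ^ (k + 1) :=
        sup_le_sup_left (sup_le (mul_le_mul_right (pow_le_pow_left' le_sup_left _) _) le_rfl) _

end Submodule

theorem Ideal.ofList_ofFn {A : Type*} [CommRing A] {n : ℕ} (v : Fin n → A) :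
    Ideal.ofList (List.ofFn v) = Ideal.span (Set.range v) :=
  congrArg Ideal.span (Set.ext fun x => List.mem_ofFn' v x)

namespace MvPolynomial

variable {A ι : Type*} [CommRing A]

theorem eval_mem_mul_span_pow (v : ι → A) {J : Ideal A} {d : ℕ} {F : MvPolynomial ι A}
    (hF : F.IsHomogeneous d) (hJ : F ∈ Ideal.map C J) :
    eval v F ∈ J * Ideal.span (Set.range v) ^ d := by
  classical
  rw [F.as_sum, map_sum]
  refine Ideal.sum_mem _ fun m hm => ?_
  have hmon : eval v (monomial m 1) ∈ Ideal.span (Set.range v) ^ d :=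
    (Ideal.mem_span_pow_iff_exists_isHomogeneous v _).2
      ⟨_, isHomogeneous_monomial _ (by
        rw [Finsupp.degree_eq_weight_one]; exact hF (mem_support_iff.1 hm)), rfl⟩
  rw [← mul_one (F.coeff m), ← C_mul_monomial, map_mul, eval_C]
  exact Ideal.mul_mem_mul (mem_map_C_iff.1 hJ m) hmon

theorem mem_map_C_of_isHomogeneous_zero (v : ι → A) {J : Ideal A} {F : MvPolynomial ι A}
    (hF : F.IsHomogeneous 0) (hJ : eval v F ∈ J) : F ∈ Ideal.map C J := by
  obtain ⟨c, rfl⟩ : ∃ c, F = C c :=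
    ⟨_, totalDegree_eq_zero_iff_eq_C.1 (Nat.le_zero.1 hF.totalDegree_le)⟩
  exact Ideal.mem_map_of_mem _ (by simpa using hJ)

theorem rename_mem_map_C {κ : Type*} (f : ι → κ) {J : Ideal A}
    {G : MvPolynomial ι A} (hG : G ∈ Ideal.map C J) : rename f G ∈ Ideal.map C J := by
  have h := Ideal.mem_map_of_mem (rename (R := A) f).toRingHom hG
  rwa [Ideal.map_map, show (rename (R := A) f).toRingHom.comp C = C from
    RingHom.ext (rename_C f)] at h

theorem homogeneousSubmodule_succ_le (n d : ℕ) :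
    homogeneousSubmodule (Fin (n + 1)) A (d + 1) ≤
      (homogeneousSubmodule (Fin n) A (d + 1)).map (rename Fin.castSucc).toLinearMap ⊔
        Submodule.span A {X (Fin.last n)} * homogeneousSubmodule (Fin (n + 1)) A d := by
  have hX : homogeneousSubmodule (Fin (n + 1)) A 1 =
      (homogeneousSubmodule (Fin n) A 1).map (rename Fin.castSucc).toLinearMap ⊔
        Submodule.span A {X (Fin.last n)} := by
    have hrange : Set.range (X : Fin (n + 1) → MvPolynomial (Fin (n + 1)) A) =
        insert (X (Fin.last n)) (Set.range ((rename Fin.castSucc).toLinearMap ∘ X)) := by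
      conv_lhs => rw [← Fin.snoc_init_self X, Fin.range_snoc]
      simp [Function.comp_def, Fin.init_def]
    rw [homogeneousSubmodule_one_eq_span_X, homogeneousSubmodule_one_eq_span_X,
      Submodule.map_span, ← Set.range_comp, hrange, Submodule.span_insert, sup_comm]
  rw [← homogeneousSubmodule_one_pow A (d + 1), ← homogeneousSubmodule_one_pow A (d + 1),
    ← homogeneousSubmodule_one_pow A d, Submodule.map_pow, hX]
  exact Submodule.sup_pow_succ_le _ _ d

end MvPolynomial

section QuasiRegular

open MvPolynomial

variable {A : Type*} [CommRing A]

def IsQuasiRegular {ι : Type*} (v : ι → A) : Prop :=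
  ∀ (d : ℕ) (F : MvPolynomial ι A), F.IsHomogeneous d →
    eval v F ∈ Ideal.span (Set.range v) ^ (d + 1) → F ∈ Ideal.map C (Ideal.span (Set.range v))

theorem isQuasiRegular_of_isEmpty {ι : Type*} [IsEmpty ι] (v : ι → A) : IsQuasiRegular v := by
  intro d F _ hF
  rw [eq_C_of_isEmpty F, eval_C] at hF
  rw [eq_C_of_isEmpty F]
  exact Ideal.mem_map_of_mem C (Ideal.pow_le_self d.succ_ne_zero hF)

theorem IsQuasiRegular.mem_pow_of_mul_mem_pow {ι : Type*} {v : ι → A} (hv : IsQuasiRegular v)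
    {a : A} (ha : IsSMulRegular (A ⧸ Ideal.span (Set.range v)) a) {k : ℕ} {x : A}
    (hx : a * x ∈ Ideal.span (Set.range v) ^ k) : x ∈ Ideal.span (Set.range v) ^ k := by
  induction k generalizing x with
  | zero => simp
  | succ k ih =>
    obtain ⟨F, hF, rfl⟩ := (Ideal.mem_span_pow_iff_exists_isHomogeneous v x).1
      (ih (Ideal.pow_le_pow_right k.le_succ hx))
    have haF : C a * F ∈ Ideal.map C (Ideal.span (Set.range v)) :=
      hv k _ (by simpa using (isHomogeneous_C _ a).mul hF) (by rwa [map_mul, eval_C])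
    have hF' : F ∈ Ideal.map C (Ideal.span (Set.range v)) := mem_map_C_iff.2 fun m =>
      mem_of_isSMulRegular_quotient_of_smul_mem ha (by
        simpa only [coeff_C_mul, smul_eq_mul] using mem_map_C_iff.1 haF m)
    simpa only [← pow_succ'] using eval_mem_mul_span_pow v hF hF'

theorem IsQuasiRegular.snoc {n : ℕ} {v : Fin n → A} (hv : IsQuasiRegular v) {a : A}
    (ha : IsSMulRegular (A ⧸ Ideal.span (Set.range v)) a) :
    IsQuasiRegular (Fin.snoc v a : Fin (n + 1) → A) := by
  set I' := Ideal.span (Set.range v)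
  have hI : Ideal.span (Set.range (Fin.snoc v a : Fin (n + 1) → A)) = I' ⊔ Ideal.span {a} := by
    rw [Fin.range_snoc, Ideal.span_insert, sup_comm]
  intro d
  induction d with
  | zero => exact fun F hF he => mem_map_C_of_isHomogeneous_zero _ hF (by simpa using he)
  | succ d ih =>
    intro F hF he
    -- `F = G(X₁, …, Xₙ) + Xₙ₊₁ H`; regularity of `a` first gives `H(v) ∈ I ^ (d + 1)`, and
    -- then a form `G + a Z` in the first `n` variables vanishing on `v` to order `d + 2`.
    obtain ⟨_, ⟨G, hG, rfl⟩, _, hXH, hGH⟩ :=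
      Submodule.mem_sup.1 (homogeneousSubmodule_succ_le n d hF)
    obtain ⟨H, hH, rfl⟩ := Submodule.mem_span_singleton_mul.1 hXH
    subst hGH
    have hGv : eval v G ∈ I' ^ (d + 1) :=
      (Ideal.mem_span_pow_iff_exists_isHomogeneous v _).2 ⟨G, hG, rfl⟩
    obtain ⟨P, hP, _, haR, hPR⟩ :=
      Submodule.mem_sup.1 (Submodule.sup_pow_succ_le I' (Ideal.span {a}) (d + 1) (hI ▸ he))
    obtain ⟨R, hR, rfl⟩ := Ideal.mem_span_singleton_mul.1 haR
    have hFv : eval v G + a * eval (Fin.snoc v a) H = P + a * R := by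
      rw [hPR]
      simp [eval_rename, Function.comp_def]
    have hHR : eval (Fin.snoc v a) H - R ∈ I' ^ (d + 1) :=
      hv.mem_pow_of_mul_mem_pow ha (by
        rw [show a * (eval (Fin.snoc v a) H - R) = P - eval v G by linear_combination hFv]
        exact sub_mem (Ideal.pow_le_pow_right (d + 1).le_succ hP) hGv)
    have hH' : H ∈ Ideal.map C (Ideal.span (Set.range (Fin.snoc v a))) := by
      refine ih H hH ?_
      rw [hI, ← sub_add_cancel (eval (Fin.snoc v a) H) R]
      exact add_mem (Ideal.pow_right_mono le_sup_left _ hHR) hR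
    obtain ⟨Z, hZ, hZv⟩ := (Ideal.mem_span_pow_iff_exists_isHomogeneous v _).1 hHR
    have hGZ : G + C a * Z ∈ Ideal.map C I' := by
      refine hv (d + 1) _ (hG.add (by simpa using (isHomogeneous_C _ a).mul hZ)) ?_
      rw [map_add, map_mul, eval_C, hZv,
        show eval v G + a * (eval (Fin.snoc v a) H - R) = P by linear_combination hFv]
      exact hP
    have hG' : G ∈ Ideal.map C (Ideal.span (Set.range (Fin.snoc v a))) := by
      rw [← add_sub_cancel_right G (C a * Z)]
      refine sub_mem (Ideal.map_mono (hI ▸ le_sup_left) hGZ) (Ideal.mul_mem_right _ _ ?_)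
      exact Ideal.mem_map_of_mem C (Ideal.subset_span ⟨Fin.last n, by simp⟩)
    exact add_mem (rename_mem_map_C _ hG') (Ideal.mul_mem_left _ _ hH')

theorem isQuasiRegular_of_isWeaklyRegular {n : ℕ} (v : Fin n → A)
    (hv : RingTheory.Sequence.IsWeaklyRegular A (List.ofFn v)) : IsQuasiRegular v := by
  induction n with
  | zero => exact isQuasiRegular_of_isEmpty v
  | succ n ih =>
    rw [List.ofFn_succ', List.concat_eq_append,
      RingTheory.Sequence.isWeaklyRegular_append_iff, smul_eq_mul, Ideal.mul_top,
      RingTheory.Sequence.isWeaklyRegular_singleton_iff, Ideal.ofList_ofFn] at hv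
    rw [← Fin.snoc_init_self v]
    exact (ih _ hv.1).snoc hv.2

theorem IsQuasiRegular.mem_pow_succ_or_mem_pow_succ {ι : Type*} {v : ι → A}
    (hv : IsQuasiRegular v) (hI : (Ideal.span (Set.range v)).IsPrime) {m n : ℕ} {x y : A}
    (hx : x ∈ Ideal.span (Set.range v) ^ m) (hy : y ∈ Ideal.span (Set.range v) ^ n)
    (hxy : x * y ∈ Ideal.span (Set.range v) ^ (m + n + 1)) :
    x ∈ Ideal.span (Set.range v) ^ (m + 1) ∨ y ∈ Ideal.span (Set.range v) ^ (n + 1) := by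
  obtain ⟨F, hF, rfl⟩ := (Ideal.mem_span_pow_iff_exists_isHomogeneous v x).1 hx
  obtain ⟨G, hG, rfl⟩ := (Ideal.mem_span_pow_iff_exists_isHomogeneous v y).1 hy
  have hFG : map (Ideal.Quotient.mk (Ideal.span (Set.range v))) (F * G) = 0 := by
    rw [← RingHom.mem_ker, ker_map, Ideal.mk_ker]
    exact hv (m + n) _ (hF.mul hG) (by rwa [map_mul])
  rw [map_mul, mul_eq_zero] at hFG
  simp only [← RingHom.mem_ker, ker_map, Ideal.mk_ker, pow_succ'] at hFG ⊢
  exact hFG.imp (eval_mem_mul_span_pow v hF) (eval_mem_mul_span_pow v hG)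

end QuasiRegular

section Rees

open Polynomial

variable {A : Type*} [CommRing A]

theorem Polynomial.coeff_mul_sub_mul_coeff_mem_pow_succ {I : Ideal A}
    {p q : A[X]} (hp : p ∈ reesAlgebra I) (hq : q ∈ reesAlgebra I) {m n : ℕ}
    (hpm : ∀ i < m, p.coeff i ∈ I ^ (i + 1)) (hqn : ∀ j < n, q.coeff j ∈ I ^ (j + 1)) :
    (p * q).coeff (m + n) - p.coeff m * q.coeff n ∈ I ^ (m + n + 1) := by
  have hmn : (m, n) ∈ Finset.HasAntidiagonal.antidiagonal (m + n) :=
    Finset.HasAntidiagonal.mem_antidiagonal.2 rfl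
  rw [coeff_mul, ← Finset.add_sum_erase _ _ hmn, add_sub_cancel_left]
  refine Ideal.sum_mem _ fun ⟨i, j⟩ hij => ?_
  obtain ⟨hne, hij⟩ := Finset.mem_erase.1 hij
  rw [Finset.HasAntidiagonal.mem_antidiagonal] at hij
  rcases lt_or_ge i m with hi | hi
  · simpa [← pow_add, show i + 1 + j = m + n + 1 by omega] using
      Ideal.mul_mem_mul (hpm i hi) (hq j)
  · have hj : j < n := by
      by_contra hj
      exact hne (Prod.ext (by omega) (by omega))
    simpa [← pow_add, show i + (j + 1) = m + n + 1 by omega] using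
      Ideal.mul_mem_mul (hp i) (hqn j hj)

variable (I : Ideal A)

theorem mem_smul_reesAlgebra_iff (p : A[X]) :
    p ∈ I • Subalgebra.toSubmodule (reesAlgebra I) ↔ ∀ i, p.coeff i ∈ I ^ (i + 1) := by
  constructor
  · intro hp
    refine Submodule.smul_induction_on hp (fun b hb q hq i => ?_) fun p q hp hq i => ?_
    · rw [coeff_smul, smul_eq_mul, pow_succ']
      exact Ideal.mul_mem_mul hb (hq i)
    · simpa only [coeff_add] using add_mem (hp i) (hq i)
  · intro hp
    rw [p.as_sum_support]
    refine Submodule.sum_mem _ fun i _ => ?_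
    have hi := hp i
    rw [pow_succ'] at hi
    refine Submodule.mul_induction_on hi (fun b hb c hc => ?_) fun x y hx hy => ?_
    · rw [← smul_eq_mul, ← smul_monomial]
      exact Submodule.smul_mem_smul hb (reesAlgebra.monomial_mem.2 hc)
    · simpa only [map_add] using add_mem hx hy

theorem mem_map_algebraMap_reesAlgebra_iff (f : reesAlgebra I) :
    f ∈ I.map (algebraMap A (reesAlgebra I)) ↔ ∀ i, (f : A[X]).coeff i ∈ I ^ (i + 1) := by
  have hval : (I • ⊤ : Submodule A (reesAlgebra I)).map (reesAlgebra I).val.toLinearMap =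
      I • Subalgebra.toSubmodule (reesAlgebra I) := by
    rw [Submodule.map_smul'', Submodule.map_top]
    congr 1
    ext p
    simp
  rw [← Submodule.restrictScalars_mem A, ← Ideal.smul_top_eq_map,
    ← Submodule.comap_map_eq_of_injective (f := (reesAlgebra I).val.toLinearMap)
      Subtype.val_injective (I • ⊤), hval, Submodule.mem_comap]
  exact mem_smul_reesAlgebra_iff I f

theorem isPrime_map_algebraMap_reesAlgebra (hI : I ≠ ⊤)
    (hgr : ∀ {m n : ℕ} {x y : A}, x ∈ I ^ m → y ∈ I ^ n → x * y ∈ I ^ (m + n + 1) →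
      x ∈ I ^ (m + 1) ∨ y ∈ I ^ (n + 1)) :
    (I.map (algebraMap A (reesAlgebra I))).IsPrime := by
  classical
  refine Ideal.isPrime_iff.2 ⟨fun htop => hI ?_, fun {f g} hfg => ?_⟩
  · have h1 := (mem_map_algebraMap_reesAlgebra_iff I 1).1 (htop ▸ Submodule.mem_top) 0
    exact (Ideal.eq_top_iff_one I).2 (by simpa using h1)
  simp only [mem_map_algebraMap_reesAlgebra_iff] at hfg ⊢
  by_contra! ⟨hf, hg⟩
  have key := Polynomial.coeff_mul_sub_mul_coeff_mem_pow_succ f.2 g.2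
    (fun i hi => not_not.1 (Nat.find_min hf hi)) (fun j hj => not_not.1 (Nat.find_min hg hj))
  have hfg' := sub_mem (hfg _) key
  rw [Subalgebra.coe_mul, sub_sub_cancel] at hfg'
  rcases hgr (f.2 _) (g.2 _) hfg' with h | h
  exacts [Nat.find_spec hf h, Nat.find_spec hg h]

end Rees

theorem associatedGraded_isDomain_general (A : Type*) [CommRing A]
    (as : List A) (hreg : RingTheory.Sequence.IsRegular A as)
    (I : Ideal A) (hI : I = Ideal.ofList as) (hprime : I.IsPrime) :
    IsDomain ((reesAlgebra I) ⧸
      Ideal.map (algebraMap A (reesAlgebra I)) I) := by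
  have hv : IsQuasiRegular as.get :=
    isQuasiRegular_of_isWeaklyRegular _ ((List.ofFn_get as).symm ▸ hreg.toIsWeaklyRegular)
  rw [← List.ofFn_get as, Ideal.ofList_ofFn] at hI
  subst hI
  have := isPrime_map_algebraMap_reesAlgebra _ hprime.ne_top
    (hv.mem_pow_succ_or_mem_pow_succ hprime)
  exact Ideal.Quotient.isDomain _

/-- Let `A` be a commutative (Noetherian) ring and `I` a prime ideal generated by a
regular sequence. Then the associated graded ring `gr_I(A) = ⊕_{d ≥ 0} I^d/I^{d+1}`
is an integral domain. Here we realize `gr_I(A)` via the canonical isomorphism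
`gr_I(A) ≅ Rees(I) / I·Rees(I)`, where `Rees(I) = ⊕_{d ≥ 0} I^d` is the Rees algebra
(Mathlib's `reesAlgebra I`, a subalgebra of `A[X]`) and `I·Rees(I)` is the ideal of
`Rees(I)` generated by the image of `I`. -/
theorem associatedGraded_isDomain (A : Type*) [CommRing A] [IsNoetherianRing A]
    (as : List A) (hreg : RingTheory.Sequence.IsRegular A as)
    (I : Ideal A) (hI : I = Ideal.ofList as) (hprime : I.IsPrime) :
    IsDomain ((reesAlgebra I) ⧸
      Ideal.map (algebraMap A (reesAlgebra I)) I) :=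
  associatedGraded_isDomain_general A as hreg I hI hprime
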